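/- arXiv:2002.06755 — 3 statements merged into one kernel-verified Lean document; each statement's English description precedes it below -/
import Mathlib

section
/- Let f: ℝ^d → ℝ be L-Lipschitz and differentiable at x_i. If ã_{ij} ≥ 0, ∑_{j∈N(i)} ã_{ij} = 1, and x_i = ∑_{j∈N(i)} ã_{ij} x_j + ε_i, then |f(x_i) − ∑_{j∈N(i)} ã_{ij} f(x_j)| ≤ L‖ε_i‖₂ + o(max_{j∈N(i)} ‖x_j − x_i‖₂) as the neighborhood radius max_{j∈N(i)} ‖x_j − x_i‖₂ → 0, where the little-o term is uniform in the weights. -/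
/-- Theorem 1: label smoothing error is bounded by `L‖ε‖` plus a little-o of the
neighborhood radius, uniformly in the weights. -/
theorem stmt_1 {d : ℕ} {ι : Type*}
    (f : EuclideanSpace ℝ (Fin d) → ℝ) (L : ℝ)
    (hf : ∀ x y, |f x - f y| ≤ L * ‖x - y‖)
    (xi : EuclideanSpace ℝ (Fin d)) (hdiff : DifferentiableAt ℝ f xi) :
    ∀ δ > (0 : ℝ), ∃ ρ > (0 : ℝ),
      ∀ (N : Finset ι) (a : ι → ℝ) (x : ι → EuclideanSpace ℝ (Fin d))
        (ε : EuclideanSpace ℝ (Fin d)) (R : ℝ),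
        (∀ j ∈ N, 0 ≤ a j) → (∑ j ∈ N, a j = 1) →
        (xi = (∑ j ∈ N, a j • x j) + ε) →
        (∀ j ∈ N, ‖x j - xi‖ ≤ R) → R ≤ ρ →
        |f xi - ∑ j ∈ N, a j * f (x j)| ≤ L * ‖ε‖ + δ * R := by
  intro δ hδ
  set f' := fderiv ℝ f xi with hf'
  -- the derivative applied to any vector is bounded by L times its norm
  have hder : ∀ v : EuclideanSpace ℝ (Fin d), |f' v| ≤ L * ‖v‖ := by
    intro v
    rcases eq_or_ne v 0 with rfl | hv
    · simp
    · have hvpos : 0 < ‖v‖ := norm_pos_iff.2 hv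
      have hL : 0 ≤ L := by
        have h1 := hf (xi + v) xi
        have h2 : (0:ℝ) ≤ L * ‖xi + v - xi‖ := le_trans (abs_nonneg _) h1
        have h3 : xi + v - xi = v := by abel
        rw [h3] at h2
        exact nonneg_of_mul_nonneg_right (by linarith [h2] : (0:ℝ) ≤ ‖v‖ * L) hvpos
      have hnorm : ‖f'‖ ≤ L := by
        apply norm_fderiv_le_of_lip' ℝ hL
        filter_upwards with y
        calc ‖f y - f xi‖ = |f y - f xi| := rfl
          _ ≤ L * ‖y - xi‖ := hf y xi
      calc |f' v| ≤ ‖f'‖ * ‖v‖ := f'.le_opNorm v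
        _ ≤ L * ‖v‖ := by gcongr
  -- little-o estimate from differentiability
  have hlo := hdiff.hasFDerivAt.isLittleO
  rw [Asymptotics.isLittleO_iff] at hlo
  have hev := hlo hδ
  rw [Metric.eventually_nhds_iff] at hev
  obtain ⟨ρ, hρ, hball⟩ := hev
  refine ⟨ρ / 2, by positivity, ?_⟩
  intro N a x ε R ha hsum hxi hR hRρ
  -- N is nonempty, so R ≥ 0
  have hN : N.Nonempty := by
    by_contra h
    rw [Finset.not_nonempty_iff_eq_empty] at h
    simp [h] at hsum
  obtain ⟨j₀, hj₀⟩ := hN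
  have hR0 : 0 ≤ R := le_trans (norm_nonneg _) (hR j₀ hj₀)
  -- remainder terms
  have hrem : ∀ j ∈ N, |f (x j) - f xi - f' (x j - xi)| ≤ δ * R := by
    intro j hj
    have hdist : dist (x j) xi < ρ := by
      rw [dist_eq_norm]
      exact lt_of_le_of_lt (le_trans (hR j hj) hRρ) (by linarith)
    have := hball hdist
    calc |f (x j) - f xi - f' (x j - xi)| = ‖f (x j) - f xi - f' (x j - xi)‖ := rfl
      _ ≤ δ * ‖x j - xi‖ := this
      _ ≤ δ * R := by gcongr; exact hR j hj
  -- key algebraic identity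
  have hεsum : (∑ j ∈ N, a j • (x j - xi)) = -ε := by
    have : (∑ j ∈ N, a j • (x j - xi)) = (∑ j ∈ N, a j • x j) - (∑ j ∈ N, a j) • xi := by
      rw [Finset.sum_smul]
      rw [← Finset.sum_sub_distrib]
      congr 1
      ext j
      rw [smul_sub]
    rw [this, hsum, one_smul, hxi]
    abel
  have key : f xi - ∑ j ∈ N, a j * f (x j)
      = f' ε - ∑ j ∈ N, a j * (f (x j) - f xi - f' (x j - xi)) := by
    have hsplit : ∑ j ∈ N, a j * f (x j)
        = (∑ j ∈ N, a j) * f xi + f' (∑ j ∈ N, a j • (x j - xi))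
          + ∑ j ∈ N, a j * (f (x j) - f xi - f' (x j - xi)) := by
      rw [map_sum, Finset.sum_mul, ← Finset.sum_add_distrib, ← Finset.sum_add_distrib]
      congr 1
      ext j
      rw [map_smul]
      ring_nf
    rw [hsplit, hεsum, hsum, map_neg, one_mul]
    ring
  rw [key]
  calc |f' ε - ∑ j ∈ N, a j * (f (x j) - f xi - f' (x j - xi))|
      ≤ |f' ε| + |∑ j ∈ N, a j * (f (x j) - f xi - f' (x j - xi))| := abs_sub _ _
    _ ≤ L * ‖ε‖ + δ * R := by
        gcongr
        · exact hder ε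
        · calc |∑ j ∈ N, a j * (f (x j) - f xi - f' (x j - xi))|
              ≤ ∑ j ∈ N, |a j * (f (x j) - f xi - f' (x j - xi))| :=
                Finset.abs_sum_le_sum_abs _ _
            _ ≤ ∑ j ∈ N, a j * (δ * R) := by
                apply Finset.sum_le_sum
                intro j hj
                rw [abs_mul, abs_of_nonneg (ha j hj)]
                exact mul_le_mul_of_nonneg_left (hrem j hj) (ha j hj)
            _ = δ * R := by rw [← Finset.sum_mul, hsum, one_mul]
end

section
/- Let P be a row-stochastic matrix on n nodes. Independently label each node with probability 1−β (so each node is unlabeled with probability β), conditioning on node a being unlabeled and node b being labeled. For a fixed path of length j from a to b, the probability that all nodes on the path other than b are unlabeled is β^j, assuming all nodes on the path are distinct and the path's internal nodes exclude b. Consequently, the expectation over the random labeling of the restricted path sum ∑_{j=1}^{k} ∑_{unlabeled-only paths of length j from a to b} ∏ weights equals ∑_{j=1}^{k} β^j (P^j)_{ab}, provided all paths counted have distinct internal nodes each unlabeled independently with probability β. -/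
lemma indicator_prob {n : ℕ} (β : ℝ) (S : Finset (Fin n)) :
    ∑ ℓ : Fin n → Bool,
        (∏ i, if ℓ i then β else 1 - β) *
          (if ∀ i ∈ S, ℓ i = true then 1 else 0) = β ^ S.card := by
  have h1 : ∀ ℓ : Fin n → Bool,
      (if ∀ i ∈ S, ℓ i = true then (1:ℝ) else 0) =
        ∏ i ∈ S, (if ℓ i then (1:ℝ) else 0) := by
    intro ℓ
    by_cases h : ∀ i ∈ S, ℓ i = true
    · rw [if_pos h]
      exact (Finset.prod_eq_one fun i hi => by rw [if_pos (h i hi)]).symm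
    · push_neg at h
      obtain ⟨i, hi, hℓ⟩ := h
      rw [if_neg (by push_neg; exact ⟨i, hi, hℓ⟩)]
      exact (Finset.prod_eq_zero hi (by simp [hℓ])).symm
  have h2 : ∀ ℓ : Fin n → Bool,
      (∏ i, if ℓ i then β else 1 - β) *
        (if ∀ i ∈ S, ℓ i = true then (1:ℝ) else 0) =
      ∏ i : Fin n, ((if ℓ i then β else 1 - β) *
        (if i ∈ S then (if ℓ i then (1:ℝ) else 0) else 1)) := by
    intro ℓ
    rw [h1, Finset.prod_mul_distrib]
    congr 1
    rw [Finset.prod_ite_mem, Finset.univ_inter]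
  simp_rw [h2]
  rw [← Fintype.piFinset_univ, Finset.sum_prod_piFinset (Finset.univ : Finset Bool)
    (fun i x => (if x then β else 1 - β) * (if i ∈ S then (if x then (1:ℝ) else 0) else 1))]
  have h3 : ∀ i : Fin n,
      (∑ x ∈ (Finset.univ : Finset Bool), ((if x then β else 1 - β) *
        (if i ∈ S then (if x then (1:ℝ) else 0) else 1))) =
      if i ∈ S then β else 1 := by
    intro i
    rw [Fintype.sum_bool]
    by_cases h : i ∈ S <;> simp [h]
  simp_rw [h3]
  rw [Finset.prod_ite_mem, Finset.univ_inter, Finset.prod_const]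

lemma path_sum {n : ℕ} (P : Matrix (Fin n) (Fin n) ℝ) (j : ℕ) (a b : Fin n) :
    ∑ v : Fin (j + 1) → Fin n,
        (if v 0 = a ∧ v (Fin.last j) = b then
          ∏ i : Fin j, P (v i.castSucc) (v i.succ) else 0) = (P ^ j) a b := by
  induction j generalizing a b with
  | zero =>
    rw [pow_zero, Matrix.one_apply]
    have hterm0 : ∀ v : Fin 1 → Fin n,
        (if v 0 = a ∧ v (Fin.last 0) = b then
          ∏ i : Fin 0, P (v i.castSucc) (v i.succ) else 0) =
        if v = (fun _ => a) then (if a = b then (1:ℝ) else 0) else 0 := by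
      intro v
      rcases eq_or_ne (v 0) a with h | h
      · have hva : v = fun _ => a := funext fun i => by
          rw [Subsingleton.elim i 0]; exact h
        subst hva
        simp [Fin.last]
      · rw [if_neg (fun hc => h hc.1), if_neg (fun hh => h (by rw [hh]))]
    simp_rw [hterm0]
    rw [Finset.sum_ite_eq' Finset.univ (fun _ => a)]
    simp
  | succ j ih =>
    have key := fun c => ih c b
    rw [pow_succ', Matrix.mul_apply]
    rw [← ((Fin.consEquiv (fun _ : Fin (j+2) => Fin n)).sum_comp
      (fun v : Fin (j + 2) → Fin n => if v 0 = a ∧ v (Fin.last (j+1)) = b then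
        ∏ i : Fin (j+1), P (v i.castSucc) (v i.succ) else 0))]
    rw [Fintype.sum_prod_type]
    have hterm : ∀ (c : Fin n) (w : Fin (j+1) → Fin n),
        (fun v : Fin (j + 2) → Fin n => if v 0 = a ∧ v (Fin.last (j+1)) = b then
          ∏ i : Fin (j+1), P (v i.castSucc) (v i.succ) else 0)
          ((Fin.consEquiv (fun _ : Fin (j+2) => Fin n)) (c, w)) =
        if c = a then
          (if w (Fin.last j) = b then P c (w 0) * ∏ i : Fin j, P (w i.castSucc) (w i.succ) else 0)
        else 0 := by
      intro c w
      have hv : ((Fin.consEquiv (fun _ : Fin (j+2) => Fin n)) (c, w)) = Fin.cons c w := rfl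
      simp only [hv]
      have hlast : (Fin.cons c w : Fin (j+2) → Fin n) (Fin.last (j+1)) = w (Fin.last j) := by
        rw [← Fin.succ_last, Fin.cons_succ]
      have hcs : ∀ i : Fin j, (Fin.cons c w : Fin (j+2) → Fin n) i.succ.castSucc = w i.castSucc := by
        intro i
        rw [← Fin.succ_castSucc, Fin.cons_succ]
      have hprod : (∏ i : Fin (j+1), P ((Fin.cons c w : Fin (j+2) → Fin n) i.castSucc)
          ((Fin.cons c w : Fin (j+2) → Fin n) i.succ)) =
          P c (w 0) * ∏ i : Fin j, P (w i.castSucc) (w i.succ) := by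
        rw [Fin.prod_univ_succ]
        simp [hcs, Fin.cons_succ]
      rw [hlast, hprod, Fin.cons_zero]
      by_cases hc : c = a <;> by_cases hw : w (Fin.last j) = b <;> simp [hc, hw]
    simp_rw [hterm]
    have hpull : ∀ c : Fin n,
        (∑ w : Fin (j+1) → Fin n, if c = a then
          (if w (Fin.last j) = b then P c (w 0) * ∏ i : Fin j, P (w i.castSucc) (w i.succ) else 0)
        else 0) =
        if c = a then (∑ w : Fin (j+1) → Fin n,
          if w (Fin.last j) = b then P c (w 0) * ∏ i : Fin j, P (w i.castSucc) (w i.succ) else 0)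
        else 0 := by
      intro c
      split <;> simp
    simp_rw [hpull]
    rw [Finset.sum_ite_eq' Finset.univ a]
    simp only [Finset.mem_univ, if_true]
    have hsplit : ∀ w : Fin (j+1) → Fin n,
        (if w (Fin.last j) = b then P a (w 0) * ∏ i : Fin j, P (w i.castSucc) (w i.succ) else 0) =
        ∑ c : Fin n, if w 0 = c ∧ w (Fin.last j) = b then
          P a c * ∏ i : Fin j, P (w i.castSucc) (w i.succ) else 0 := by
      intro w
      rw [Finset.sum_eq_single (w 0)]
      · by_cases hw : w (Fin.last j) = b <;> simp [hw]
      · intro c _ hc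
        rw [if_neg]
        rintro ⟨h1, _⟩
        exact hc h1.symm
      · simp
    simp_rw [hsplit]
    rw [Finset.sum_comm]
    refine Finset.sum_congr rfl fun c _ => ?_
    rw [← key c, Finset.mul_sum]
    refine Finset.sum_congr rfl fun w _ => ?_
    by_cases hw : w 0 = c ∧ w (Fin.last j) = b <;> simp [hw]


/-- Theorem 2 ingredients: nodes are independently unlabeled with probability `β`
(the random labeling `ℓ : Fin n → Bool` has `ℓ i = true` iff `i` is unlabeled,
with product weights `∏ i, if ℓ i then β else 1 - β`).
(1) For a fixed length-`j` path from `a` to `b` whose nodes other than the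
terminal node `b` are distinct and different from `b`, the probability that all
those nodes are unlabeled is `β ^ j`.
(2) Consequently, the expected restricted path sum over unlabeled-only paths of
length `1,…,k` from `a` to `b` equals `∑_{j=1}^k β^j (P^j)_{ab}`, provided every
path with nonzero weight has distinct non-terminal nodes excluding `b`. -/
theorem stmt_10 {n : ℕ} (P : Matrix (Fin n) (Fin n) ℝ)
    (hnn : ∀ i j, 0 ≤ P i j) (hrow : ∀ i, ∑ j, P i j = 1)
    (β : ℝ) (hβ0 : 0 ≤ β) (hβ1 : β ≤ 1) (a b : Fin n) (k : ℕ)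
    (hdistinct : ∀ j ∈ Finset.Icc 1 k, ∀ v : Fin (j + 1) → Fin n,
      v 0 = a → v (Fin.last j) = b →
      (∏ i : Fin j, P (v i.castSucc) (v i.succ)) ≠ 0 →
      (Function.Injective fun i : Fin j => v i.castSucc) ∧
        ∀ i : Fin j, v i.castSucc ≠ b) :
    (∀ j : ℕ, ∀ v : Fin (j + 1) → Fin n,
      v 0 = a → v (Fin.last j) = b →
      (Function.Injective fun i : Fin j => v i.castSucc) →
      (∀ i : Fin j, v i.castSucc ≠ b) →
      ∑ ℓ : Fin n → Bool,
          (∏ i, if ℓ i then β else 1 - β) *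
            (if ∀ i : Fin j, ℓ (v i.castSucc) = true then 1 else 0) = β ^ j) ∧
    ∑ ℓ : Fin n → Bool,
        (∏ i, if ℓ i then β else 1 - β) *
          (∑ j ∈ Finset.Icc 1 k,
            ∑ v ∈ Finset.univ.filter
                (fun v : Fin (j + 1) → Fin n => v 0 = a ∧ v (Fin.last j) = b),
              (if ∀ i : Fin j, ℓ (v i.castSucc) = true then
                  ∏ i : Fin j, P (v i.castSucc) (v i.succ)
                else 0)) =
      ∑ j ∈ Finset.Icc 1 k, β ^ j * (P ^ j) a b := by
  have part1 : ∀ j : ℕ, ∀ v : Fin (j + 1) → Fin n,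
      v 0 = a → v (Fin.last j) = b →
      (Function.Injective fun i : Fin j => v i.castSucc) →
      (∀ i : Fin j, v i.castSucc ≠ b) →
      ∑ ℓ : Fin n → Bool,
          (∏ i, if ℓ i then β else 1 - β) *
            (if ∀ i : Fin j, ℓ (v i.castSucc) = true then 1 else 0) = β ^ j := by
    intro j v hv0 hvl hinj hne
    have hS : (Finset.image (fun i : Fin j => v i.castSucc) Finset.univ).card = j := by
      rw [Finset.card_image_of_injective _ hinj, Finset.card_univ, Fintype.card_fin]
    have hip := indicator_prob β (Finset.image (fun i : Fin j => v i.castSucc) Finset.univ)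
    rw [hS] at hip
    rw [← hip]
    refine Finset.sum_congr rfl fun ℓ _ => ?_
    refine congrArg _ (if_congr ?_ rfl rfl)
    simp
  refine ⟨part1, ?_⟩
  simp_rw [Finset.mul_sum]
  rw [Finset.sum_comm]
  refine Finset.sum_congr rfl fun j hj => ?_
  rw [Finset.sum_comm]
  have hps : (P ^ j) a b = ∑ v ∈ Finset.univ.filter
      (fun v : Fin (j + 1) → Fin n => v 0 = a ∧ v (Fin.last j) = b),
      ∏ i : Fin j, P (v i.castSucc) (v i.succ) := by
    rw [← path_sum P j a b, Finset.sum_filter]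
  rw [hps, Finset.mul_sum]
  refine Finset.sum_congr rfl fun v hv => ?_
  obtain ⟨hv0, hvl⟩ := (Finset.mem_filter.mp hv).2
  by_cases hz : (∏ i : Fin j, P (v i.castSucc) (v i.succ)) = 0
  · simp [hz]
  · obtain ⟨hinj, hne⟩ := hdistinct j hj v hv0 hvl hz
    have h1 := part1 j v hv0 hvl hinj hne
    have hre : ∀ ℓ : Fin n → Bool,
        (∏ i, if ℓ i then β else 1 - β) *
          (if ∀ i : Fin j, ℓ (v i.castSucc) = true then
            ∏ i : Fin j, P (v i.castSucc) (v i.succ) else 0) =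
        ((∏ i, if ℓ i then β else 1 - β) *
          (if ∀ i : Fin j, ℓ (v i.castSucc) = true then 1 else 0)) *
          ∏ i : Fin j, P (v i.castSucc) (v i.succ) := by
      intro ℓ
      by_cases hc : ∀ i : Fin j, ℓ (v i.castSucc) = true <;> simp [hc]
    simp_rw [hre]
    rw [← Finset.sum_mul, h1]
end

section
/- Consider LPA as in Lemma 2 with label set L = {1,…,c} and one-hot initial labels. For an unlabeled node a, the y_a-th coordinate of the k-th iterate satisfies y_a^{(k)}[y_a] = ∑_{b: y_b = y_a} I_l(a,b;k), where I_l(a,b;k) = ∑_{j=1}^{k} ∑_{unlabeled-only paths of length j from a to b} ∏ weights. Hence the predicted probability Pr(ŷ_a = y_a) = y_a^{(k)}[y_a] / ∑_{i∈L} y_a^{(k)}[i] is proportional (for fixed a, k) to the total intra-class label influence ∑_{b: y_b = y_a} I_l(a,b;k). -/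
open Matrix

/-- Theorem 3 (label influence and LPA's prediction): with one-hot initial labels
clamped at the labeled nodes (indices `< m`), the mass of unlabeled node `a`'s
`k`-th iterate on its own class `lab a` equals the total intra-class label
influence `∑_{b : lab b = lab a} I_l(a,b;k)`, where
`I_l(a,b;k) = ∑_{j=1}^k (P_{UU}^{j-1} P_{UL})_{a,b}` (encoded via the matrix `Q`
obtained from `P` by zeroing the labeled columns); hence the predicted
probability of class `lab a` is this quantity divided by the normalization. -/
theorem stmt_11 {n m c : ℕ} (P : Matrix (Fin n) (Fin n) ℝ)
    (hnn : ∀ i j, 0 ≤ P i j) (hrow : ∀ i, ∑ j, P i j = 1)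
    (lab : Fin n → Fin c)
    (Q : Matrix (Fin n) (Fin n) ℝ)
    (hQ : ∀ i j, Q i j = if (j : ℕ) < m then 0 else P i j)
    (Y : ℕ → Matrix (Fin n) (Fin c) ℝ)
    (hY0 : ∀ i l, Y 0 i l = if (i : ℕ) < m ∧ lab i = l then 1 else 0)
    (hYs : ∀ k i l, Y (k + 1) i l =
      if (i : ℕ) < m then Y 0 i l else ∑ j, P i j * Y k j l)
    (a : Fin n) (ha : m ≤ (a : ℕ)) (k : ℕ) :
    Y k a (lab a) =
      (∑ b ∈ Finset.univ.filter (fun b : Fin n => (b : ℕ) < m ∧ lab b = lab a),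
        ∑ j ∈ Finset.Icc 1 k, (Q ^ (j - 1) * P) a b) ∧
    Y k a (lab a) / (∑ l, Y k a l) =
      (∑ b ∈ Finset.univ.filter (fun b : Fin n => (b : ℕ) < m ∧ lab b = lab a),
        ∑ j ∈ Finset.Icc 1 k, (Q ^ (j - 1) * P) a b) / (∑ l, Y k a l) := by
  -- convert Icc sums to range sums
  have hIcc : ∀ (K : ℕ) (i b : Fin n),
      ∑ j ∈ Finset.Icc 1 K, (Q ^ (j - 1) * P) i b
        = ∑ t ∈ Finset.range K, (Q ^ t * P) i b := by
    intro K i b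
    induction K with
    | zero => simp
    | succ K ih =>
      rw [Finset.sum_Icc_succ_top (Nat.le_add_left 1 K), ih, Finset.sum_range_succ]
      simp
  -- labeled nodes are clamped
  have hfix : ∀ (k : ℕ) (i : Fin n) (l : Fin c), (i : ℕ) < m → Y k i l = Y 0 i l := by
    intro k
    induction k with
    | zero => intro i l _; rfl
    | succ k ih => intro i l hi; rw [hYs, if_pos hi]
  have main : ∀ (k : ℕ) (i : Fin n), m ≤ (i : ℕ) → ∀ l : Fin c,
      Y k i l = ∑ b ∈ Finset.univ.filter (fun b : Fin n => (b : ℕ) < m ∧ lab b = l),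
        ∑ t ∈ Finset.range k, (Q ^ t * P) i b := by
    intro k
    induction k with
    | zero =>
      intro i hi l
      simp [hY0, Nat.not_lt.mpr hi]
    | succ k ih =>
      intro i hi l
      rw [hYs, if_neg (Nat.not_lt.mpr hi)]
      have hsplit := Finset.sum_filter_add_sum_filter_not Finset.univ
        (fun j : Fin n => (j : ℕ) < m) (fun j => P i j * Y k j l)
      rw [← hsplit]
      have h1 : ∑ j ∈ Finset.univ.filter (fun j : Fin n => (j : ℕ) < m), P i j * Y k j l
          = ∑ b ∈ Finset.univ.filter (fun b : Fin n => (b : ℕ) < m ∧ lab b = l), P i b := by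
        rw [Finset.sum_filter, Finset.sum_filter]
        refine Finset.sum_congr rfl fun j _ => ?_
        by_cases hj : (j : ℕ) < m
        · rw [hfix k j l hj, hY0]
          by_cases hl : lab j = l <;> simp [hj, hl]
        · simp [hj]
      have h2 : ∑ j ∈ Finset.univ.filter (fun j : Fin n => ¬ (j : ℕ) < m), P i j * Y k j l
          = ∑ b ∈ Finset.univ.filter (fun b : Fin n => (b : ℕ) < m ∧ lab b = l),
              ∑ t ∈ Finset.range k, (Q ^ (t + 1) * P) i b := by
        have step1 : ∑ j ∈ Finset.univ.filter (fun j : Fin n => ¬ (j : ℕ) < m), P i j * Y k j l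
            = ∑ j ∈ Finset.univ.filter (fun j : Fin n => ¬ (j : ℕ) < m),
                ∑ b ∈ Finset.univ.filter (fun b : Fin n => (b : ℕ) < m ∧ lab b = l),
                  ∑ t ∈ Finset.range k, P i j * (Q ^ t * P) j b := by
          refine Finset.sum_congr rfl fun j hj => ?_
          rw [ih j (Nat.le_of_not_lt (Finset.mem_filter.mp hj).2) l, Finset.mul_sum]
          exact Finset.sum_congr rfl fun b _ => Finset.mul_sum _ _ _
        rw [step1, Finset.sum_comm]
        refine Finset.sum_congr rfl fun b _ => ?_
        rw [Finset.sum_comm]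
        refine Finset.sum_congr rfl fun t _ => ?_
        have : ∑ j ∈ Finset.univ.filter (fun j : Fin n => ¬ (j : ℕ) < m),
            P i j * (Q ^ t * P) j b = ∑ j, Q i j * (Q ^ t * P) j b := by
          rw [Finset.sum_filter]
          refine Finset.sum_congr rfl fun j _ => ?_
          rw [hQ]
          by_cases hj : (j : ℕ) < m <;> simp [hj]
        rw [this]
        have : ∑ j, Q i j * (Q ^ t * P) j b = (Q * (Q ^ t * P)) i b := by
          simp [Matrix.mul_apply]
        rw [this, ← Matrix.mul_assoc, ← pow_succ']
      rw [h1, h2, ← Finset.sum_add_distrib]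
      refine Finset.sum_congr rfl fun b _ => ?_
      rw [Finset.sum_range_succ']
      simp [add_comm]
  have hmain := main k a ha (lab a)
  have key : Y k a (lab a) =
      ∑ b ∈ Finset.univ.filter (fun b : Fin n => (b : ℕ) < m ∧ lab b = lab a),
        ∑ j ∈ Finset.Icc 1 k, (Q ^ (j - 1) * P) a b := by
    rw [hmain]
    exact Finset.sum_congr rfl fun b _ => (hIcc k a b).symm
  exact ⟨key, by rw [key]⟩
end
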